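/- arXiv:2009.04853 — 5 statements merged into one kernel-verified Lean document; each statement's English description precedes it below -/
import Mathlib

section
/- For any nonnegative integer n, positive integer d, and real x, the sum over i from 0 to d-1 of \overline{B}_n((x+i)/d) equals d^{1-n} \overline{B}_n(x), where \overline{B}_n(x) = B_n(x - \lfloor x \rfloor) is the n-th Bernoulli function. -/
/-!
Both sides are 1-periodic in `x`: replacing `x` by `x + 1` shifts the arguments `(x + i) / d`
cyclically, the last one becoming the first plus `1`. So we may take `x ∈ [0, 1)`, where every
`(x + i) / d` lies in `[0, 1)` and the claim is Raabe's multiplication formula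
`d ^ n ∑_{i<d} B_n ((t + i) / d) = d B_n(t)` for Bernoulli polynomials. That formula is read off
from the exponential generating function `G(t)(X) = ∑ B_n(t) X^n / n!`, which satisfies
`G(t)(X) (e^X - 1) = X e^{tX}`: multiplying both `∑_{j<d} G((t + j) / d)(dX)` and `d G(t)(X)` by
`e^{dX} - 1 = (e^X - 1) ∑_{j<d} e^{jX}` gives `d X e^{tX} ∑_{j<d} e^{jX}`.
-/

noncomputable section

/-- Signed Stirling numbers of the first kind. -/
def stirling1 : ℕ → ℕ → ℤ
  | 0, 0 => 1
  | 0, _ + 1 => 0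
  | _ + 1, 0 => 0
  | n + 1, m + 1 => stirling1 n m - n * stirling1 n (m + 1)

/-- `n!`-normalized coefficients of `Ei_k (log (1+t))`. -/
def polyExpCoeff (k : ℤ) (n : ℕ) : ℚ :=
  ∑ m ∈ Finset.Icc 1 n, (stirling1 n m : ℚ) / (m : ℚ) ^ (k - 1)

/-- Type 2 poly-Bernoulli numbers of index `k`, defined by the recursion coming from the
generating function `Ei_k (log (1+t)) / (e^t - 1) = ∑ B_n^{(k)} t^n/n!`. -/
def polyBernoulli (k : ℤ) : ℕ → ℚ
  | n =>
    (polyExpCoeff k (n + 1) -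
      ∑ l ∈ (Finset.range n).attach, ((n + 1).choose l.1 : ℚ) * polyBernoulli k l.1) / (n + 1)
  termination_by n => n
  decreasing_by exact Finset.mem_range.mp l.2

/-- Type 2 poly-Bernoulli polynomials of index `k`, as functions on `ℝ`. -/
def polyBernoulliPoly (k : ℤ) (n : ℕ) (x : ℝ) : ℝ :=
  ∑ l ∈ Finset.range (n + 1), (n.choose l : ℝ) * (polyBernoulli k l : ℝ) * x ^ (n - l)

/-- Bernoulli polynomials as functions on `ℝ`. -/
def bernoulliPolyFun (n : ℕ) (x : ℝ) : ℝ :=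
  ∑ l ∈ Finset.range (n + 1), (n.choose l : ℝ) * (bernoulli l : ℝ) * x ^ (n - l)

/-- Bernoulli functions `B̄_n(x) = B_n(⟨x⟩)`. -/
def bernoulliBar (n : ℕ) (x : ℝ) : ℝ := bernoulliPolyFun n (Int.fract x)

/-- Type 2 poly-Bernoulli functions `B̄_n^{(k)}(x) = B_n^{(k)}(⟨x⟩)`. -/
def polyBernoulliBar (k : ℤ) (n : ℕ) (x : ℝ) : ℝ := polyBernoulliPoly k n (Int.fract x)

/-- Poly-Dedekind sums `S_p^{(k)}(h,m)`. -/
def polyDedekindSum (k : ℤ) (p h m : ℕ) : ℝ :=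
  ∑ μ ∈ Finset.Ico 1 m, (μ / m : ℝ) * polyBernoulliBar k p (h * μ / m)

/-- Apostol's generalized Dedekind sums `S_p(h,m)`. -/
def genDedekindSum (p h m : ℕ) : ℝ :=
  ∑ μ ∈ Finset.Ico 1 m, (μ / m : ℝ) * bernoulliBar p (h * μ / m)

/-- The polyexponential function `Ei_k`. -/
def polyExp (k : ℤ) (x : ℝ) : ℝ :=
  ∑' n : ℕ, x ^ (n + 1) / ((n + 1 : ℝ) ^ k * (Nat.factorial n : ℝ))

/-- The sawtooth function `((x))`. -/
def sawtooth (x : ℝ) : ℝ := if Int.fract x = 0 then 0 else Int.fract x - 1 / 2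

end
open Finset PowerSeries

section BernoulliGenFun

variable {A : Type*} [CommRing A] [Algebra ℚ A]

noncomputable def bernoulliGenFun (t : A) : A⟦X⟧ :=
  PowerSeries.mk fun n => Polynomial.aeval t ((1 / n.factorial : ℚ) • Polynomial.bernoulli n)

theorem bernoulliGenFun_mul_exp_sub_one (t : A) :
    bernoulliGenFun t * (exp A - 1) = X * rescale t (exp A) :=
  Polynomial.bernoulli_generating_function t

theorem coeff_bernoulliGenFun (t : A) (n : ℕ) :
    coeff n (bernoulliGenFun t) =
      (n.factorial : ℚ)⁻¹ • Polynomial.aeval t (Polynomial.bernoulli n) := by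
  simp [bernoulliGenFun]

end BernoulliGenFun

section Multiplication

variable {K : Type*} [Field K] [CharZero K]

theorem rescale_sum_bernoulliGenFun (d : ℕ) (t : K) :
    rescale (d : K) (∑ j ∈ range d, bernoulliGenFun ((t + j) / d)) =
      C (d : K) * bernoulliGenFun t := by
  rcases eq_or_ne d 0 with rfl | hd
  · simp
  have hdK : (d : K) ≠ 0 := Nat.cast_ne_zero.mpr hd
  have hgeom :
      (exp K - 1) * ∑ j ∈ range d, rescale (j : K) (exp K) = rescale (d : K) (exp K) - 1 := by
    simp only [← exp_pow_eq_rescale_exp, mul_geom_sum]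
  have hne : rescale (d : K) (exp K) - 1 ≠ 0 := by
    intro h
    have := congrArg (coeff 1) h
    simp [coeff_rescale, hdK] at this
  refine mul_right_cancel₀ hne ?_
  calc rescale (d : K) (∑ j ∈ range d, bernoulliGenFun ((t + j) / d)) *
        (rescale (d : K) (exp K) - 1)
      = ∑ j ∈ range d, C (d : K) * X * rescale (t + j) (exp K) := by
        rw [← map_one (rescale (d : K)), ← map_sub, ← map_mul, sum_mul, map_sum]
        refine sum_congr rfl fun j _ => ?_
        rw [bernoulliGenFun_mul_exp_sub_one, map_mul, rescale_X, rescale_rescale,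
          div_mul_cancel₀ _ hdK]
    _ = C (d : K) * (X * rescale t (exp K)) * ∑ j ∈ range d, rescale (j : K) (exp K) := by
        simp only [mul_sum, ← exp_mul_exp_eq_exp_add, mul_assoc]
    _ = C (d : K) * bernoulliGenFun t * (rescale (d : K) (exp K) - 1) := by
        rw [← hgeom, ← bernoulliGenFun_mul_exp_sub_one]
        ring

theorem natCast_pow_mul_sum_aeval_bernoulli_add_div (n d : ℕ) (t : K) :
    (d : K) ^ n * ∑ j ∈ range d, Polynomial.aeval ((t + j) / d) (Polynomial.bernoulli n) =
      d * Polynomial.aeval t (Polynomial.bernoulli n) := by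
  have h := congrArg (coeff n) (rescale_sum_bernoulliGenFun d t)
  simp only [coeff_rescale, map_sum, coeff_bernoulliGenFun, coeff_C_mul, ← smul_sum,
    mul_smul_comm] at h
  rw [← mul_sum] at h
  exact smul_right_injective K (inv_ne_zero (Nat.cast_ne_zero.mpr n.factorial_ne_zero)) h

end Multiplication

theorem Function.Periodic.sum_range_comp_add_div {K M : Type*} [DivisionRing K]
    [AddCommGroup M] {f : K → M} (hf : Function.Periodic f 1) (d : ℕ) :
    Function.Periodic (fun x => ∑ i ∈ range d, f ((x + i) / d)) 1 := by
  intro x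
  by_cases hd : (d : K) = 0
  · simp only [hd, div_zero]
  have hshift := sum_range_succ' (fun i => f ((x + i) / d)) d
  rw [sum_range_succ, add_div (x : K), div_self hd, hf, Nat.cast_zero, add_zero] at hshift
  simpa [add_right_comm x 1, add_assoc] using add_right_cancel hshift.symm

theorem bernoulliPolyFun_eq_aeval (n : ℕ) (x : ℝ) :
    bernoulliPolyFun n x = Polynomial.aeval x (Polynomial.bernoulli n) := by
  simp only [bernoulliPolyFun, Polynomial.bernoulli, map_sum, Polynomial.aeval_monomial,
    eq_ratCast]
  refine sum_congr rfl fun i _ => ?_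
  push_cast
  ring

theorem sum_bernoulliPolyFun_add_div (n d : ℕ) (hd : d ≠ 0) (t : ℝ) :
    ∑ j ∈ range d, bernoulliPolyFun n ((t + j) / d) =
      (d : ℝ) ^ ((1 : ℤ) - n) * bernoulliPolyFun n t := by
  have hdR : (d : ℝ) ^ n ≠ 0 := pow_ne_zero _ (Nat.cast_ne_zero.mpr hd)
  simp only [bernoulliPolyFun_eq_aeval]
  rw [zpow_sub₀ (Nat.cast_ne_zero.mpr hd), zpow_one, zpow_natCast, div_mul_eq_mul_div,
    eq_div_iff hdR, mul_comm, natCast_pow_mul_sum_aeval_bernoulli_add_div]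

theorem bernoulliBar_periodic (n : ℕ) : Function.Periodic (bernoulliBar n) 1 := fun x => by
  simp only [bernoulliBar, Int.fract_add_one]

theorem bernoulliBar_of_mem_Ico {n : ℕ} {x : ℝ} (hx : x ∈ Set.Ico 0 1) :
    bernoulliBar n x = bernoulliPolyFun n x := by
  rw [bernoulliBar, Int.fract_eq_self.mpr hx]

/-- Multiplication formula for Bernoulli functions:
`∑_{i=0}^{d-1} B̄_n((x+i)/d) = d^{1-n} B̄_n(x)`. -/
theorem bernoulliBar_multiplication (n : ℕ) (d : ℕ) (hd : 0 < d) (x : ℝ) :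
    ∑ i ∈ Finset.range d, bernoulliBar n ((x + i) / d) =
      (d : ℝ) ^ ((1 : ℤ) - n) * bernoulliBar n x := by
  have hdR : (0 : ℝ) < d := Nat.cast_pos.mpr hd
  have hsum := (bernoulliBar_periodic n).sum_range_comp_add_div d
  have hfract_mem (i : ℕ) (hi : i ∈ range d) : (Int.fract x + i) / d ∈ Set.Ico 0 1 := by
    have hid : (i : ℝ) + 1 ≤ d := by exact_mod_cast mem_range.mp hi
    constructor
    · positivity
    · rw [div_lt_one hdR]; linarith [Int.fract_lt_one x]
  calc ∑ i ∈ range d, bernoulliBar n ((x + i) / d)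
      = ∑ i ∈ range d, bernoulliBar n ((Int.fract x + i) / d) := by
        rw [← Int.self_sub_floor, ← mul_one (⌊x⌋ : ℝ)]
        exact (hsum.sub_int_mul_eq _).symm
    _ = ∑ i ∈ range d, bernoulliPolyFun n ((Int.fract x + i) / d) :=
        sum_congr rfl fun i hi => bernoulliBar_of_mem_Ico (hfract_mem i hi)
    _ = (d : ℝ) ^ ((1 : ℤ) - n) * bernoulliBar n x :=
        sum_bernoulliPolyFun_add_div n d hd.ne' _
end

section
/- For n \ge 1 and any integer k, B_n^{(k)}(1) - B_n^{(k)} = \sum_{m=1}^{n} S_1(n,m) / m^{k-1}, where S_1(n,m) are the (signed) Stirling numbers of the first kind. -/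
/-- The coefficient identity behind `(e^t - 1) ∑ B_n^{(k)} t^n/n! = Ei_k (log (1 + t))`;
the recursion defining `polyBernoulli` is this identity solved for its top term. -/
theorem sum_range_choose_mul_polyBernoulli (k : ℤ) (n : ℕ) :
    ∑ l ∈ Finset.range (n + 1), ((n + 1).choose l : ℚ) * polyBernoulli k l =
      polyExpCoeff k (n + 1) := by
  have hn : (n + 1 : ℚ) ≠ 0 := n.cast_add_one_ne_zero
  rw [Finset.sum_range_succ, Nat.choose_succ_self_right, polyBernoulli,
    Finset.sum_attach (Finset.range n) fun l => ((n + 1).choose l : ℚ) * polyBernoulli k l]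
  push_cast
  field_simp
  ring

theorem polyBernoulliPoly_one (k : ℤ) (n : ℕ) :
    polyBernoulliPoly k n 1 =
      ∑ l ∈ Finset.range (n + 1), (n.choose l : ℝ) * (polyBernoulli k l : ℝ) := by
  simp only [polyBernoulliPoly, one_pow, mul_one]

/-- `B_n^{(k)}(1) - B_n^{(k)} = ∑_{m=1}^n S_1(n,m)/m^{k-1}`. -/
theorem polyBernoulliPoly_one_sub (k : ℤ) (n : ℕ) (hn : 1 ≤ n) :
    polyBernoulliPoly k n 1 - (polyBernoulli k n : ℝ) =
      ∑ m ∈ Finset.Icc 1 n, (stirling1 n m : ℝ) / (m : ℝ) ^ (k - 1) := by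
  obtain ⟨m, rfl⟩ := Nat.exists_eq_add_of_le' hn
  have hsum := congrArg (Rat.cast : ℚ → ℝ) (sum_range_choose_mul_polyBernoulli k m)
  push_cast [polyExpCoeff] at hsum
  rw [polyBernoulliPoly_one, Finset.sum_range_succ, Nat.choose_self, Nat.cast_one, one_mul,
    add_sub_cancel_right, hsum]
end

section
/- For positive integers s, p and any integer k: \sum_{\nu=0}^{p} \binom{p}{\nu} \binom{p-\nu+2}{s} B_{\nu}^{(k)}/(p-\nu+2) = \binom{p+1}{s} B_{p-s+1}^{(k)}(1)/(p+1) + ((s-1)/(p+1)) \binom{p+2}{s} B_{p-s+2}^{(k)}(1)/(p+2). -/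
/-!
Since `B_n^{(k)}(1) = ∑_ν C(n,ν) B_ν^{(k)}`, both sides are linear combinations of the numbers
`B_ν^{(k)}`, and the identity holds coefficientwise: after the absorption rule
`C(n+1,k+1)/(n+1) = C(n,k)/(k+1)` has removed the denominators, the coefficient identity is
Pascal's rule combined with the symmetry `C(n,k) C(n-k,m) = C(n,m) C(n-m,k)`.
-/

theorem Nat.choose_mul_choose_sub_comm (n k m : ℕ) :
    n.choose k * (n - k).choose m = n.choose m * (n - m).choose k := by
  rcases le_or_gt (k + m) n with h | h
  · have hk := Nat.choose_mul (n := n) (Nat.le_add_right k m)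
    have hm := Nat.choose_mul (n := n) (Nat.le_add_left m k)
    simp only [Nat.add_sub_cancel_left, Nat.add_sub_cancel] at hk hm
    rw [← hk, ← hm, Nat.choose_symm_add]
  · grind

theorem Nat.choose_mul_choose_sub_add_one_succ (n k t : ℕ) :
    n.choose k * (n - k + 1).choose (t + 1) =
      n.choose (t + 1) * (n - (t + 1)).choose k + n.choose t * (n - t).choose k := by
  rw [Nat.choose_succ_succ, Nat.mul_add, Nat.choose_mul_choose_sub_comm n k (t + 1),
    Nat.choose_mul_choose_sub_comm n k t, Nat.add_comm]

theorem Nat.cast_choose_succ_div {K : Type*} [Field K] [CharZero K] (n k : ℕ) :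
    ((n + 1).choose (k + 1) : K) / (n + 1) = n.choose k / (k + 1) := by
  rw [div_eq_div_iff (Nat.cast_add_one_ne_zero n) (Nat.cast_add_one_ne_zero k)]
  exact_mod_cast (mul_comm (n.choose k) (n + 1) ▸ Nat.add_one_mul_choose_eq n k).symm

theorem polyBernoulli_identity1_coeff {K : Type*} [Field K] [CharZero K] (p ν s : ℕ)
    (hs : 0 < s) :
    (p.choose ν : K) * ((p - ν + 2).choose s : K) / ((p - ν : ℕ) + 2) =
      ((p + 1).choose s : K) * ((p + 1 - s).choose ν : K) / (p + 1) +
        ((s : K) - 1) / (p + 1) * ((p + 2).choose s : K) * ((p + 2 - s).choose ν : K) /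
          (p + 2) := by
  obtain rfl | ⟨u, rfl⟩ : s = 1 ∨ ∃ u, s = u + 2 := by
    rcases s with _ | _ | u <;> simp_all
  · have : ((p - ν : ℕ) + 2 : K) ≠ 0 := by exact_mod_cast Nat.succ_ne_zero (p - ν + 1)
    simp [this, Nat.cast_add_one_ne_zero p]
  have hLeft : ((p - ν + 2).choose (u + 2) : K) / ((p - ν : ℕ) + 2) =
      (p - ν + 1).choose (u + 1) / (u + 2) := by
    exact_mod_cast Nat.cast_choose_succ_div (K := K) (p - ν + 1) (u + 1)
  have hFirst : ((p + 1).choose (u + 2) : K) / (p + 1) = p.choose (u + 1) / (u + 2) := by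
    exact_mod_cast Nat.cast_choose_succ_div (K := K) p (u + 1)
  have hSecond : (((u + 2 : ℕ) : K) - 1) / (p + 1) * ((p + 2).choose (u + 2) : K) / (p + 2) =
      p.choose u / (u + 2) := by
    have hTop₂ : ((p + 2).choose (u + 2) : K) / (p + 2) = (p + 1).choose (u + 1) / (u + 2) := by
      exact_mod_cast Nat.cast_choose_succ_div (K := K) (p + 1) (u + 1)
    have hTop₁ : ((p + 1).choose (u + 1) : K) / (p + 1) = p.choose u / (u + 1) := by
      exact_mod_cast Nat.cast_choose_succ_div (K := K) p u
    calc _ = ((u : K) + 1) / (u + 2) * (((p + 1).choose (u + 1) : K) / (p + 1)) := by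
          rw [mul_div_assoc, hTop₂]; push_cast; ring
      _ = _ := by
          rw [hTop₁]; field_simp
  have hPascal := congrArg (Nat.cast : ℕ → K) (Nat.choose_mul_choose_sub_add_one_succ p ν u)
  push_cast at hPascal
  rw [mul_div_assoc, hLeft, mul_div_right_comm _ ((p + 1 - (u + 2)).choose ν : K), hFirst,
    mul_div_right_comm _ ((p + 2 - (u + 2)).choose ν : K), hSecond,
    show p + 1 - (u + 2) = p - (u + 1) by omega, show p + 2 - (u + 2) = p - u by omega]
  linear_combination hPascal / ((u : K) + 2)

theorem polyBernoulliPoly_one_eq_sum_range (k : ℤ) {n N : ℕ} (hN : n + 1 ≤ N) :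
    polyBernoulliPoly k n 1 =
      ∑ ν ∈ Finset.range N, (n.choose ν : ℝ) * (polyBernoulli k ν : ℝ) := by
  simp only [polyBernoulliPoly, one_pow, mul_one]
  refine Finset.sum_subset (Finset.range_subset_range.2 hN) fun ν _ hν => ?_
  rw [Nat.choose_eq_zero_of_lt (by simpa using hν), Nat.cast_zero, zero_mul]

theorem polyBernoulli_identity1_general (s p : ℕ) (hs : 0 < s) (k : ℤ) :
    ∑ ν ∈ Finset.range (p + 1),
        (p.choose ν : ℝ) * ((p - ν + 2).choose s : ℝ) * (polyBernoulli k ν : ℝ) /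
          ((p - ν : ℕ) + 2) =
      ((p + 1).choose s : ℝ) * polyBernoulliPoly k (p + 1 - s) 1 / (p + 1) +
        ((s : ℝ) - 1) / (p + 1) * ((p + 2).choose s : ℝ) *
          polyBernoulliPoly k (p + 2 - s) 1 / (p + 2) := by
  rw [← Finset.eventually_constant_sum (N := p + 1) (n := p + 2) ?vanish (by omega),
    polyBernoulliPoly_one_eq_sum_range k (by omega : p + 1 - s + 1 ≤ p + 2),
    polyBernoulliPoly_one_eq_sum_range k (by omega : p + 2 - s + 1 ≤ p + 2),
    Finset.mul_sum, Finset.sum_div, Finset.mul_sum, Finset.sum_div, ← Finset.sum_add_distrib]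
  case vanish =>
    intro ν hν
    rw [Nat.choose_eq_zero_of_lt (by omega), Nat.cast_zero, zero_mul, zero_mul, zero_div]
  refine Finset.sum_congr rfl fun ν _ => ?_
  linear_combination (polyBernoulli k ν : ℝ) * polyBernoulli_identity1_coeff (K := ℝ) p ν s hs

/-- Identity relating poly-Bernoulli numbers and the values `B^{(k)}(1)`. -/
theorem polyBernoulli_identity1 (s p : ℕ) (hs : 0 < s) (hp : 0 < p) (k : ℤ) :
    ∑ ν ∈ Finset.range (p + 1),
        (p.choose ν : ℝ) * ((p - ν + 2).choose s : ℝ) * (polyBernoulli k ν : ℝ) /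
          ((p - ν : ℕ) + 2) =
      ((p + 1).choose s : ℝ) * polyBernoulliPoly k (p + 1 - s) 1 / (p + 1) +
        ((s : ℝ) - 1) / (p + 1) * ((p + 2).choose s : ℝ) *
          polyBernoulliPoly k (p + 2 - s) 1 / (p + 2) :=
  polyBernoulli_identity1_general s p hs k
end

section
/- For a positive integer m and any odd integer p \ge 3 and any integer k, m^p S_p^{(k)}(1,m) = \sum_{\nu=0}^{p} \binom{p}{\nu} (B_{\nu}^{(k)}/(p+2-\nu)) m^{p+1} + \sum_{i=1}^{p-1} \sum_{\nu=0}^{p+1-i} \binom{p}{\nu} \binom{p+2-\nu}{i} (B_{\nu}^{(k)}/(p+2-\nu)) B_i m^{p+1-i} + B_{p+1}. -/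
section PolyDedekindAux

lemma polyBernoulli_zero (k : ℤ) : polyBernoulli k 0 = 1 := by
  rw [polyBernoulli]
  simp [polyExpCoeff, stirling1]

lemma bernoulli_odd_zero {n : ℕ} (h : Odd n) (h1 : 1 < n) : bernoulli n = 0 := by
  rw [bernoulli_eq_bernoulli'_of_ne_one (by omega), bernoulli'_eq_zero_of_odd h h1]

end PolyDedekindAux

/-- Formula for `m^p S_p^{(k)}(1,m)` for odd `p ≥ 3`. -/
theorem polyDedekind_one (m p : ℕ) (k : ℤ) (hm : 0 < m) (hodd : Odd p) (hp : 3 ≤ p) :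
    (m : ℝ) ^ p * polyDedekindSum k p 1 m =
      (∑ ν ∈ Finset.range (p + 1),
          (p.choose ν : ℝ) * (polyBernoulli k ν : ℝ) / ((p - ν : ℕ) + 2)) * (m : ℝ) ^ (p + 1) +
        (∑ i ∈ Finset.Icc 1 (p - 1), ∑ ν ∈ Finset.range (p + 1 - i + 1),
          (p.choose ν : ℝ) * ((p - ν + 2).choose i : ℝ) * (polyBernoulli k ν : ℝ) /
              ((p - ν : ℕ) + 2) * (bernoulli i : ℝ) * (m : ℝ) ^ (p + 1 - i)) +
        (bernoulli (p + 1) : ℝ) := by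
  have hm' : (m : ℝ) ≠ 0 := Nat.cast_ne_zero.mpr hm.ne'
  set T : ℕ → ℕ → ℝ := fun ν i =>
    (p.choose ν : ℝ) * ((p - ν + 2).choose i : ℝ) * (polyBernoulli k ν : ℝ) /
      ((p - ν : ℕ) + 2) * (bernoulli i : ℝ) * (m : ℝ) ^ (p + 1 - i) with hT
  -- Step 1: expand the Dedekind sum
  have h1 : (m : ℝ) ^ p * polyDedekindSum k p 1 m =
      ∑ ν ∈ Finset.range (p + 1), (p.choose ν : ℝ) * (polyBernoulli k ν : ℝ) *
        ((∑ μ ∈ Finset.range m, (μ : ℝ) ^ (p - ν + 1)) * (m : ℝ) ^ ν / m) := by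
    unfold polyDedekindSum polyBernoulliBar polyBernoulliPoly
    simp only [Nat.cast_one, one_mul, Finset.mul_sum]
    rw [Finset.sum_comm]
    refine Finset.sum_congr rfl fun ν hν => ?_
    have hν' : ν ≤ p := by simpa using Nat.lt_succ_iff.mp (Finset.mem_range.mp hν)
    rw [Finset.range_eq_Ico, Finset.sum_eq_sum_Ico_succ_bot hm]
    rw [Nat.cast_zero, zero_pow (by omega), zero_add]
    rw [Finset.sum_mul, Finset.sum_div, Finset.mul_sum]
    refine Finset.sum_congr rfl fun μ hμ => ?_
    have hμ' : 1 ≤ μ ∧ μ < m := by simpa using Finset.mem_Ico.mp hμ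
    have hfr : Int.fract ((μ : ℝ) / m) = (μ : ℝ) / m := by
      rw [Int.fract_eq_self]
      constructor
      · positivity
      · rw [div_lt_one (by positivity)]
        exact_mod_cast hμ'.2
    rw [hfr]
    obtain ⟨d, rfl⟩ : ∃ d, p = ν + d := ⟨p - ν, by omega⟩
    rw [Nat.add_sub_cancel_left]
    rw [div_pow]
    field_simp
    ring
  -- Step 2: Faulhaber's formula
  have hfaul : ∀ ν : ℕ, (∑ μ ∈ Finset.range m, (μ : ℝ) ^ (p - ν + 1)) =
      ∑ i ∈ Finset.range (p - ν + 2), (bernoulli i : ℝ) * (((p - ν + 2).choose i : ℕ) : ℝ) *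
        (m : ℝ) ^ (p - ν + 2 - i) / (((p - ν : ℕ) : ℝ) + 2) := by
    intro ν
    have h := congrArg (Rat.cast (K := ℝ)) (sum_range_pow m (p - ν + 1))
    push_cast at h
    convert h using 2 with i hi
    push_cast
    ring
  -- Step 3: combine into double sum of T
  have h2 : (m : ℝ) ^ p * polyDedekindSum k p 1 m =
      ∑ ν ∈ Finset.range (p + 1), ∑ i ∈ Finset.range (p - ν + 2), T ν i := by
    rw [h1]
    refine Finset.sum_congr rfl fun ν hν => ?_
    have hν' : ν ≤ p := Nat.lt_succ_iff.mp (Finset.mem_range.mp hν)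
    rw [hfaul ν, Finset.sum_mul, Finset.sum_div, Finset.mul_sum]
    refine Finset.sum_congr rfl fun i hi => ?_
    have hi' : i ≤ p - ν + 1 := by
      have := Finset.mem_range.mp hi; omega
    rw [hT]
    simp only
    obtain ⟨d, rfl⟩ : ∃ d, p = ν + d := ⟨p - ν, by omega⟩
    simp only [Nat.add_sub_cancel_left] at hi' ⊢
    obtain ⟨j, hj⟩ : ∃ j, d + 1 = i + j := ⟨d + 1 - i, by omega⟩
    rw [show d + 2 - i = j + 1 by omega, show ν + d + 1 - i = ν + j by omega]
    have hD : ((d : ℝ) + 2) ≠ 0 := by positivity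
    field_simp
    ring
  rw [h2]
  -- Step 4: split off i = 0
  have h3 : ∀ ν ∈ Finset.range (p + 1),
      ∑ i ∈ Finset.range (p - ν + 2), T ν i =
        (p.choose ν : ℝ) * (polyBernoulli k ν : ℝ) / ((p - ν : ℕ) + 2) * (m : ℝ) ^ (p + 1) +
          ∑ i ∈ Finset.Icc 1 (p - ν + 1), T ν i := by
    intro ν hν
    rw [Finset.range_eq_Ico, Finset.sum_eq_sum_Ico_succ_bot (by omega)]
    rw [show Finset.Ico 1 (p - ν + 2) = Finset.Icc 1 (p - ν + 1) from rfl]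
    congr 1
    rw [hT]; simp
  rw [Finset.sum_congr rfl h3, Finset.sum_add_distrib, ← Finset.sum_mul]
  -- Step 5: swap the double sum
  have hswap : ∑ ν ∈ Finset.range (p + 1), ∑ i ∈ Finset.Icc 1 (p - ν + 1), T ν i =
      ∑ i ∈ Finset.Icc 1 (p + 1), ∑ ν ∈ Finset.range (p + 1 - i + 1), T ν i := by
    refine Finset.sum_comm' ?_
    intro ν i
    simp only [Finset.mem_range, Finset.mem_Icc]
    omega
  rw [hswap]
  -- Step 6: split off i = p and i = p + 1
  have hBp : (bernoulli p : ℝ) = 0 := by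
    rw [bernoulli_odd_zero hodd (by omega)]; norm_num
  have htop1 : ∑ i ∈ Finset.Icc 1 (p + 1), ∑ ν ∈ Finset.range (p + 1 - i + 1), T ν i =
      (∑ i ∈ Finset.Icc 1 p, ∑ ν ∈ Finset.range (p + 1 - i + 1), T ν i) +
        ∑ ν ∈ Finset.range (p + 1 - (p + 1) + 1), T ν (p + 1) :=
    Finset.sum_Icc_succ_top (by omega) _
  have htop2 : ∑ i ∈ Finset.Icc 1 p, ∑ ν ∈ Finset.range (p + 1 - i + 1), T ν i =
      (∑ i ∈ Finset.Icc 1 (p - 1), ∑ ν ∈ Finset.range (p + 1 - i + 1), T ν i) +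
        ∑ ν ∈ Finset.range (p + 1 - p + 1), T ν p := by
    have h := Finset.sum_Icc_succ_top (a := 1) (b := p - 1) (by omega)
      (fun i => ∑ ν ∈ Finset.range (p + 1 - i + 1), T ν i)
    rwa [show p - 1 + 1 = p by omega] at h
  have hzero : ∑ ν ∈ Finset.range (p + 1 - p + 1), T ν p = 0 := by
    refine Finset.sum_eq_zero fun ν _ => ?_
    rw [hT]
    simp [hBp]
  have htopval : ∑ ν ∈ Finset.range (p + 1 - (p + 1) + 1), T ν (p + 1) = (bernoulli (p + 1) : ℝ) := by
    rw [show p + 1 - (p + 1) + 1 = 1 by omega, Finset.sum_range_one, hT]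
    simp only [Nat.choose_zero_right, Nat.cast_one, one_mul, Nat.sub_zero, Nat.sub_self,
      pow_zero, mul_one, polyBernoulli_zero, Rat.cast_one]
    rw [Nat.choose_succ_self_right]
    have : ((p : ℝ) + 2) ≠ 0 := by positivity
    push_cast
    field_simp
    ring
  rw [htop1, htop2, hzero, htopval]
  ring
end

section
/- Let h, m be relatively prime positive integers, k an integer, and p an odd positive integer \ge 3. Then \sum_{s=0}^{p+1} \binom{p+1}{s} B_s B_{p+1-s}^{(k)}(1) (mh)^{p+1-s} = m^p \sum_{\mu=0}^{m-1} \sum_{s=0}^{p+1} \binom{p+1}{s} h^s B_s^{(k)}(\mu/m) B_{p+1-s}(h - \lfloor h\mu/m \rfloor). -/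
/-!
Write `a ⋆ b` for the binomial convolution `n ↦ ∑ₛ C(n,s) aₛ b_{n-s}`. It corresponds to the
product of exponential generating functions, hence is commutative and associative, and
`x^· ⋆ y^· = (x+y)^·`. Both `Bₙ(x)` and `Bₙ^{(k)}(x)` have the Appell form `c ⋆ x^·`, so this
calculus turns the left side into `∑ᵢ C(p+1,i) Bᵢ^{(k)} (mh)ⁱ B_{p+1-i}(mh)` and the `μ`-th
inner sum on the right into `∑ᵢ C(p+1,i) Bᵢ^{(k)} hⁱ B_{p+1-i}(h + {hμ/m})`.
Since `h` is prime to `m`, `hμ mod m` runs over all residues, and Raabe's formula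
`m Bₙ(mx) = mⁿ ∑_{r<m} Bₙ(x + r/m)` closes the argument. Raabe's formula itself follows from
`B(t)(eᵗ - 1) = t` for the generating function `B(t)` of the Bernoulli numbers, by rescaling
`t ↦ mt` and using `e^{mt} - 1 = (eᵗ - 1) ∑_{r<m} e^{rt}`.
-/

open Finset PowerSeries Nat

section BinomialConvolution

variable {R : Type*} [CommSemiring R]

def binomConv (a b : ℕ → R) (n : ℕ) : R :=
  ∑ s ∈ range (n + 1), (n.choose s : R) * a s * b (n - s)

lemma binomConv_mul_pow (a b : ℕ → R) (z : R) (n : ℕ) :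
    binomConv a b n * z ^ n = binomConv (fun i => a i * z ^ i) (fun j => b j * z ^ j) n := by
  rw [binomConv, sum_mul]
  refine sum_congr rfl fun s hs => ?_
  rw [← pow_mul_pow_sub z (mem_range_succ_iff.mp hs)]
  ring

lemma binomConv_mul_right (a b : ℕ → R) (c : R) (n : ℕ) :
    binomConv a (fun j => c * b j) n = c * binomConv a b n := by
  simp only [binomConv, mul_sum]
  exact sum_congr rfl fun _ _ => by ring

lemma sum_binomConv_right {ι : Type*} (s : Finset ι) (a : ℕ → R) (b : ι → ℕ → R)
    (n : ℕ) :
    ∑ i ∈ s, binomConv a (b i) n = binomConv a (fun j => ∑ i ∈ s, b i j) n := by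
  simp only [binomConv, mul_sum]
  exact sum_comm

end BinomialConvolution

section ExponentialGeneratingFunction

variable {K : Type*} [Field K]

def egf : (ℕ → K) →ₗ[K] K⟦X⟧ where
  toFun a := mk fun n => a n / (n ! : K)
  map_add' a b := by ext; simp [add_div]
  map_smul' c a := by ext; simp [mul_div_assoc]

lemma coeff_egf (a : ℕ → K) (n : ℕ) : coeff n (egf a) = a n / (n ! : K) :=
  coeff_mk (R := K) n fun n => a n / (n ! : K)

variable [CharZero K]

lemma egf_injective : Function.Injective (egf : (ℕ → K) → K⟦X⟧) := by
  intro a b hab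
  funext n
  have hn := congrArg (coeff n) hab
  rwa [coeff_egf, coeff_egf, div_left_inj' (by exact_mod_cast factorial_ne_zero n)] at hn

lemma egf_binomConv (a b : ℕ → K) : egf (binomConv a b) = egf a * egf b := by
  ext n
  rw [coeff_egf, coeff_mul, Nat.sum_antidiagonal_eq_sum_range_succ_mk, binomConv, sum_div]
  refine sum_congr rfl fun s hs => ?_
  have hfac := choose_mul_factorial_mul_factorial (mem_range_succ_iff.mp hs)
  simp only [coeff_egf]
  have hchoose : (n.choose s : K) ≠ 0 :=
    Nat.cast_ne_zero.mpr (choose_pos (mem_range_succ_iff.mp hs)).ne'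
  rw [← hfac]
  push_cast
  field_simp

lemma egf_pow (x : K) : egf (x ^ ·) = rescale x (exp K) := by
  ext n
  simp [coeff_egf, coeff_rescale, coeff_exp, div_eq_mul_inv]

lemma egf_mul_pow (a : ℕ → K) (z : K) : egf (fun n => a n * z ^ n) = rescale z (egf a) := by
  ext n
  simp only [coeff_egf, coeff_rescale]
  ring

lemma egf_bernoulli : egf (fun n => (bernoulli n : K)) = bernoulliPowerSeries K := by
  ext n
  simp [coeff_egf, bernoulliPowerSeries]

lemma binomConv_comm (a b : ℕ → K) : binomConv a b = binomConv b a :=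
  egf_injective <| by rw [egf_binomConv, egf_binomConv, mul_comm]

lemma binomConv_assoc (a b c : ℕ → K) :
    binomConv (binomConv a b) c = binomConv a (binomConv b c) :=
  egf_injective <| by simp only [egf_binomConv, mul_assoc]

lemma binomConv_pow_pow (x y : K) : binomConv (x ^ ·) (y ^ ·) = ((x + y) ^ ·) :=
  egf_injective <| by rw [egf_binomConv, egf_pow, egf_pow, egf_pow, exp_mul_exp_eq_exp_add]

lemma binomConv_appell_mul_pow (a b : ℕ → K) (x z : K) :
    binomConv (fun s => binomConv a (x ^ ·) s * z ^ s) b =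
      binomConv (fun i => a i * z ^ i) (binomConv b ((z * x) ^ ·)) :=
  egf_injective <| by
    simp only [egf_binomConv, egf_mul_pow, egf_pow, map_mul, rescale_rescale]
    rw [mul_comm x z]
    ring

end ExponentialGeneratingFunction

lemma bernoulliPowerSeries_mul_sum_exp_pow {K : Type*} [Field K] [CharZero K] (m : ℕ) :
    C (m : K) * bernoulliPowerSeries K =
      rescale (m : K) (bernoulliPowerSeries K) * ∑ r ∈ range m, exp K ^ r := by
  have hne : exp K - 1 ≠ 0 := fun h => by simpa using congrArg (coeff 1) h
  apply mul_right_cancel₀ hne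
  calc C (m : K) * bernoulliPowerSeries K * (exp K - 1)
      = rescale (m : K) (bernoulliPowerSeries K * (exp K - 1)) := by
        rw [mul_assoc, bernoulliPowerSeries_mul_exp_sub_one, rescale_X]
    _ = rescale (m : K) (bernoulliPowerSeries K) *
          ((∑ r ∈ range m, exp K ^ r) * (exp K - 1)) := by
        rw [geom_sum_mul, exp_pow_eq_rescale_exp, map_mul, map_sub, map_one]
    _ = _ := by ring

lemma bernoulliPolyFun_eq_binomConv (x : ℝ) :
    (bernoulliPolyFun · x) = binomConv (fun l => (bernoulli l : ℝ)) (x ^ ·) :=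
  rfl

lemma polyBernoulliPoly_eq_binomConv (k : ℤ) (x : ℝ) :
    (polyBernoulliPoly k · x) = binomConv (fun l => (polyBernoulli k l : ℝ)) (x ^ ·) :=
  rfl

lemma egf_bernoulliPolyFun (x : ℝ) :
    egf (bernoulliPolyFun · x) = bernoulliPowerSeries ℝ * rescale x (exp ℝ) := by
  rw [bernoulliPolyFun_eq_binomConv, egf_binomConv, egf_bernoulli, egf_pow]

lemma bernoulliPolyFun_add (x y : ℝ) :
    binomConv (bernoulliPolyFun · x) (y ^ ·) = (bernoulliPolyFun · (x + y)) := by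
  rw [bernoulliPolyFun_eq_binomConv, binomConv_assoc, binomConv_pow_pow]
  rfl

lemma bernoulliPolyFun_raabe (m : ℕ) (x : ℝ) (N : ℕ) :
    m * bernoulliPolyFun N (m * x) =
      (∑ r ∈ range m, bernoulliPolyFun N (x + r / m)) * m ^ N := by
  rcases m.eq_zero_or_pos with rfl | hm
  · simp
  have hm0 : (m : ℝ) ≠ 0 := by positivity
  suffices egf (fun N => m * bernoulliPolyFun N (m * x)) =
      egf (fun N => (∑ r ∈ range m, bernoulliPolyFun N (x + r / m)) * m ^ N) from
    congrFun (egf_injective this) N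
  have hshift : ∀ r : ℕ, rescale (m : ℝ) (rescale (x + r / m) (exp ℝ)) =
      rescale (m * x) (exp ℝ) * exp ℝ ^ r := by
    intro r
    rw [rescale_rescale, exp_pow_eq_rescale_exp, exp_mul_exp_eq_exp_add]
    congr 1
    field_simp
  rw [egf_mul_pow, ← Finset.sum_fn, map_sum, map_sum]
  simp only [egf_bernoulliPolyFun, map_mul, hshift, ← mul_sum]
  change egf ((m : ℝ) • (bernoulliPolyFun · (m * x))) = _
  rw [map_smul, smul_eq_C_mul, egf_bernoulliPolyFun, ← mul_assoc,
    bernoulliPowerSeries_mul_sum_exp_pow]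
  ring

lemma sum_range_mul_mod {M : Type*} [AddCommMonoid M] {h m : ℕ} (hcop : h.Coprime m)
    (f : ℕ → M) : ∑ μ ∈ range m, f (h * μ % m) = ∑ r ∈ range m, f r := by
  have hmaps : Set.MapsTo (fun μ => h * μ % m) (range m) (range m) := fun μ hμ =>
    mem_range.mpr (mod_lt _ (pos_of_ne_zero (by rintro rfl; simp at hμ)))
  have hinj : Set.InjOn (fun μ => h * μ % m) (range m) := fun μ₁ hμ₁ μ₂ hμ₂ hμ => by
    have hmod : μ₁ ≡ μ₂ [MOD m] := Nat.ModEq.cancel_left_of_coprime hcop.symm hμ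
    rwa [Nat.ModEq, mod_eq_of_lt (mem_range.mp hμ₁), mod_eq_of_lt (mem_range.mp hμ₂)] at hmod
  exact sum_nbij _ hmaps hinj (surjOn_of_injOn_of_card_le _ hmaps hinj le_rfl) fun _ _ => rfl

lemma natCast_mul_div_sub_floor (h μ m : ℕ) :
    (h : ℝ) * μ / m - ⌊(h : ℝ) * μ / m⌋ = ((h * μ % m : ℕ) : ℝ) / m := by
  rw [Int.self_sub_floor, ← Int.fract_div_natCast_eq_div_natCast_mod]
  push_cast
  rfl

lemma sum_bernoulli_mul_polyBernoulliPoly_one (k : ℤ) (z : ℝ) (n : ℕ) :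
    ∑ s ∈ range (n + 1),
        (n.choose s : ℝ) * (bernoulli s : ℝ) * polyBernoulliPoly k (n - s) 1 * z ^ (n - s) =
      binomConv (fun i => (polyBernoulli k i : ℝ) * z ^ i) (bernoulliPolyFun · z) n := by
  have h := binomConv_appell_mul_pow (fun l => (polyBernoulli k l : ℝ))
    (fun l => (bernoulli l : ℝ)) 1 z
  rw [← polyBernoulliPoly_eq_binomConv, mul_one, ← bernoulliPolyFun_eq_binomConv,
    binomConv_comm] at h
  rw [← h, binomConv]
  simp only [mul_assoc]

lemma sum_pow_mul_polyBernoulliPoly_mul_bernoulliPolyFun (k : ℤ) (z x y : ℝ) (n : ℕ) :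
    ∑ s ∈ range (n + 1), (n.choose s : ℝ) * z ^ s * polyBernoulliPoly k s x *
        bernoulliPolyFun (n - s) y =
      binomConv (fun i => (polyBernoulli k i : ℝ) * z ^ i)
        (bernoulliPolyFun · (z * x + y)) n := by
  have h := binomConv_appell_mul_pow (fun l => (polyBernoulli k l : ℝ))
    (bernoulliPolyFun · y) x z
  rw [← polyBernoulliPoly_eq_binomConv, bernoulliPolyFun_add, add_comm y] at h
  rw [← h, binomConv]
  exact sum_congr rfl fun _ _ => by ring

theorem polyBernoulli_reciprocity_aux_general (h m : ℕ) (hm : 0 < m)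
    (hcop : Nat.Coprime h m) (p : ℕ) (k : ℤ) :
    ∑ s ∈ Finset.range (p + 2),
        ((p + 1).choose s : ℝ) * (bernoulli s : ℝ) * polyBernoulliPoly k (p + 1 - s) 1 *
          ((m : ℝ) * h) ^ (p + 1 - s) =
      (m : ℝ) ^ p * ∑ μ ∈ Finset.range m, ∑ s ∈ Finset.range (p + 2),
        ((p + 1).choose s : ℝ) * (h : ℝ) ^ s * polyBernoulliPoly k s ((μ : ℝ) / m) *
          bernoulliPolyFun (p + 1 - s) ((h : ℝ) - (⌊((h : ℝ) * μ / m)⌋ : ℤ)) := by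
  set c : ℕ → ℝ := fun l => polyBernoulli k l
  have harg (μ : ℕ) :
      (h : ℝ) * (μ / m) + (h - ⌊(h : ℝ) * μ / m⌋) = h + (h * μ % m : ℕ) / m := by
    rw [← natCast_mul_div_sub_floor]
    ring
  simp only [sum_bernoulli_mul_polyBernoulliPoly_one,
    sum_pow_mul_polyBernoulliPoly_mul_bernoulliPolyFun, harg]
  rw [sum_range_mul_mod hcop fun r => binomConv _ (bernoulliPolyFun · (h + r / m)) (p + 1),
    sum_binomConv_right]
  apply mul_left_cancel₀ (show (m : ℝ) ≠ 0 by positivity)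
  calc (m : ℝ) * binomConv (fun i => c i * (m * h) ^ i) (bernoulliPolyFun · (m * h)) (p + 1)
      = binomConv (fun i => c i * (m * h) ^ i)
          (fun j => (∑ r ∈ range m, bernoulliPolyFun j (h + r / m)) * m ^ j) (p + 1) := by
        simp only [← binomConv_mul_right, bernoulliPolyFun_raabe]
    _ = binomConv (fun i => c i * h ^ i)
          (fun j => ∑ r ∈ range m, bernoulliPolyFun j (h + r / m)) (p + 1) * m ^ (p + 1) := by
        rw [binomConv_mul_pow]
        congr 1
        funext i
        ring
    _ = _ := by ring

/-- Theorem 8 of the paper. -/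
theorem polyBernoulli_reciprocity_aux (h m : ℕ) (hh : 0 < h) (hm : 0 < m)
    (hcop : Nat.Coprime h m) (p : ℕ) (hodd : Odd p) (hp : 3 ≤ p) (k : ℤ) :
    ∑ s ∈ Finset.range (p + 2),
        ((p + 1).choose s : ℝ) * (bernoulli s : ℝ) * polyBernoulliPoly k (p + 1 - s) 1 *
          ((m : ℝ) * h) ^ (p + 1 - s) =
      (m : ℝ) ^ p * ∑ μ ∈ Finset.range m, ∑ s ∈ Finset.range (p + 2),
        ((p + 1).choose s : ℝ) * (h : ℝ) ^ s * polyBernoulliPoly k s ((μ : ℝ) / m) *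
          bernoulliPolyFun (p + 1 - s) ((h : ℝ) - (⌊((h : ℝ) * μ / m)⌋ : ℤ)) :=
  polyBernoulli_reciprocity_aux_general h m hm hcop p k
end
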